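/- Fix an integer n ≥ 2 and let δ : [0,∞) → [0, 1/2) be nondecreasing with δ(t) → 0 as t → 0⁺. For an integer 1 ≤ j ≤ n define ψ₁^{(j)}(ε) = 2·arcsin(ε/(4√(j+1))), ψ₂^{(j)}(ε) = 2·arcsin(ε/(2√(j+1))), F(j,ε) = ∫_{ψ₂^{(j)}(ε)}^{π/2} sin(x)^{j−1} dx, G(j,ε) = ∫_0^{ψ₁^{(j)}(ε)} sin(x)^{j−1} dx, and w_j(r) = 1/(1 + (1 − 2δ(r/2))^{n−j}·(j+1)^{j+1}·F(j, r/2)/G(j, r/2)). Then for all integers 1 ≤ l < k ≤ n, lim_{r → 0⁺} w_l(r)/w_k(r) = +∞. -/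

import Mathlib

open Set Filter Topology

noncomputable section

def psi₁ (j : ℕ) (ε : ℝ) : ℝ := 2 * Real.arcsin (ε / (4 * Real.sqrt (j + 1)))

def psi₂ (j : ℕ) (ε : ℝ) : ℝ := 2 * Real.arcsin (ε / (2 * Real.sqrt (j + 1)))

def Fint (j : ℕ) (ε : ℝ) : ℝ :=
  ∫ x in (psi₂ j ε)..(Real.pi / 2), (Real.sin x) ^ (j - 1)

def Gint (j : ℕ) (ε : ℝ) : ℝ :=
  ∫ x in (0 : ℝ)..(psi₁ j ε), (Real.sin x) ^ (j - 1)

/-- The waist lower bound `w_j(r)` in codimension `n - j`. -/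
def wB (n j : ℕ) (δ : ℝ → ℝ) (r : ℝ) : ℝ :=
  1 / (1 + (1 - 2 * δ (r / 2)) ^ (n - j) * ((j : ℝ) + 1) ^ (j + 1) *
    (Fint j (r / 2) / Gint j (r / 2)))

/-!
As `ε → 0⁺` we have `1 - 2δ(ε) → 1`, and `F(j, ε) → ∫₀^{π/2} sin^{j-1} > 0`. Since `arcsin y ~ y`,
`ψ₁(ε) ≍ ε`, and since `2x/π ≤ sin x ≤ x` on `[0, π/2]`, `∫₀^ψ sin^{j-1} ≍ ψ^j`; hence
`G(j, ε) ≍ ε^j`. So `1 / w_j(2ε) ≍ ε^{-j}` for `j ≥ 1`, and `w_l / w_k ≍ ε^{-(k-l)} → ∞`.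
-/

open Real Asymptotics

lemma Real.isEquivalent_arcsin : arcsin ~[𝓝 0] id := by
  simpa using! (hasDerivAt_arcsin (x := 0) (by norm_num) (by norm_num)).isLittleO

lemma isTheta_one_of_tendsto {α 𝕜 : Type*} [NormedField 𝕜] {l : Filter α} {f : α → 𝕜}
    {c : 𝕜} (h : Tendsto f l (𝓝 c)) (hc : c ≠ 0) : f =Θ[l] fun _ => (1 : 𝕜) :=
  (isTheta_of_div_tendsto_nhds_ne_zero (by simpa using h) hc).symm

lemma tendsto_norm_inv_pow_nhdsGT_zero {p : ℕ} (hp : p ≠ 0) :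
    Tendsto (fun ε : ℝ => ‖(ε ^ p)⁻¹‖) (𝓝[>] 0) atTop := by
  refine ((tendsto_pow_atTop hp).comp tendsto_inv_nhdsGT_zero).congr' ?_
  filter_upwards [self_mem_nhdsWithin] with ε (hε : 0 < ε)
  rw [Function.comp_apply, norm_of_nonneg (by positivity), inv_pow]

lemma integral_sin_pow_le {ψ : ℝ} (m : ℕ) (h0 : 0 ≤ ψ) (hπ : ψ ≤ π) :
    ∫ x in 0..ψ, sin x ^ m ≤ ψ ^ (m + 1) / (m + 1) := by
  calc ∫ x in 0..ψ, sin x ^ m ≤ ∫ x in 0..ψ, x ^ m :=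
        intervalIntegral.integral_mono_on h0 ((continuous_sin.pow m).intervalIntegrable _ _)
          ((continuous_pow m).intervalIntegrable _ _) fun x hx =>
            pow_le_pow_left₀ (sin_nonneg_of_nonneg_of_le_pi hx.1 (hx.2.trans hπ)) (sin_le hx.1) m
    _ = ψ ^ (m + 1) / (m + 1) := by simp [integral_pow]

lemma mul_le_integral_sin_pow {ψ : ℝ} (m : ℕ) (h0 : 0 ≤ ψ) (hπ : ψ ≤ π / 2) :
    (2 / π) ^ m * (ψ ^ (m + 1) / (m + 1)) ≤ ∫ x in 0..ψ, sin x ^ m := by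
  calc (2 / π) ^ m * (ψ ^ (m + 1) / (m + 1)) = ∫ x in 0..ψ, (2 / π * x) ^ m := by
        simp [mul_pow, integral_pow]
    _ ≤ ∫ x in 0..ψ, sin x ^ m :=
        intervalIntegral.integral_mono_on h0
          (((continuous_const.mul continuous_id).pow m).intervalIntegrable _ _)
          ((continuous_sin.pow m).intervalIntegrable _ _) fun x hx =>
            pow_le_pow_left₀ (mul_nonneg (by positivity) hx.1) (mul_le_sin hx.1 (hx.2.trans hπ)) m

lemma isTheta_integral_sin_pow (m : ℕ) :
    (fun ψ => ∫ x in 0..ψ, sin x ^ m) =Θ[𝓝[≥] 0] fun ψ => ψ ^ (m + 1) := by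
  have hsmall : ∀ᶠ ψ in 𝓝[≥] (0 : ℝ), ψ ∈ Icc 0 (π / 2) := Icc_mem_nhdsGE (by positivity)
  refine ⟨IsBigO.of_bound 1 ?_, IsBigO.of_bound ((m + 1) * (π / 2) ^ m) ?_⟩ <;>
    filter_upwards [hsmall] with ψ ⟨h0, hπ⟩ <;>
    have hint_nonneg := (by positivity : (0 : ℝ) ≤ _).trans (mul_le_integral_sin_pow m h0 hπ)
  · rw [norm_of_nonneg hint_nonneg, norm_of_nonneg (by positivity), one_mul]
    exact (integral_sin_pow_le m h0 (by linarith [pi_pos])).trans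
      (div_le_self (by positivity) (by linarith))
  · rw [norm_of_nonneg (by positivity), norm_of_nonneg hint_nonneg]
    calc ψ ^ (m + 1) = (m + 1) * (π / 2) ^ m * ((2 / π) ^ m * (ψ ^ (m + 1) / (m + 1))) := by
          field_simp
          rw [mul_assoc, ← mul_pow, div_mul_div_comm, mul_comm π 2, div_self (by positivity),
            one_pow, mul_one]
      _ ≤ _ := by gcongr; exact mul_le_integral_sin_pow m h0 hπ

lemma psi₁_nonneg (j : ℕ) {ε : ℝ} (hε : 0 ≤ ε) : 0 ≤ psi₁ j ε :=
  mul_nonneg zero_le_two (arcsin_nonneg.2 (by positivity))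

lemma psi₁_le_pi (j : ℕ) (ε : ℝ) : psi₁ j ε ≤ π := by
  unfold psi₁
  linarith [arcsin_le_pi_div_two (ε / (4 * √((j : ℝ) + 1)))]

lemma psi₁_isTheta_id (j : ℕ) : psi₁ j =Θ[𝓝 0] id := by
  set c := 4 * √((j : ℝ) + 1)
  have hc : c ≠ 0 := by positivity
  have h : (fun ε => arcsin (ε / c)) ~[𝓝 0] fun ε => ε / c :=
    isEquivalent_arcsin.comp_tendsto (by simpa using (continuous_id.div_const c).tendsto 0)
  have hlin : (fun ε : ℝ => c⁻¹ * ε) =Θ[𝓝 0] id :=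
    (isTheta_const_mul_left (inv_ne_zero hc)).2 isTheta_rfl
  exact ((isTheta_const_mul_left two_ne_zero).2 h.isTheta).trans
    (by simpa [div_eq_inv_mul] using hlin)

lemma tendsto_psi₁_nhdsGE (j : ℕ) : Tendsto (psi₁ j) (𝓝[>] 0) (𝓝[≥] 0) := by
  have hcont : Continuous (psi₁ j) := by unfold psi₁; fun_prop
  refine tendsto_nhdsWithin_iff.2
    ⟨?_, eventually_mem_nhdsWithin.mono fun ε (hε : 0 < ε) => psi₁_nonneg j hε.le⟩
  simpa [psi₁] using (hcont.tendsto 0).mono_left nhdsWithin_le_nhds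

lemma Gint_isTheta {j : ℕ} (hj : 1 ≤ j) : Gint j =Θ[𝓝[>] 0] fun ε => ε ^ j := by
  obtain ⟨m, rfl⟩ := Nat.exists_eq_add_of_le' hj
  have ht := tendsto_psi₁_nhdsGE (m + 1)
  have h := isTheta_integral_sin_pow m
  exact IsTheta.trans ⟨h.1.comp_tendsto ht, h.2.comp_tendsto ht⟩
    (((psi₁_isTheta_id (m + 1)).mono nhdsWithin_le_nhds).pow (m + 1))

lemma Gint_nonneg (j : ℕ) {ε : ℝ} (hε : 0 ≤ ε) : 0 ≤ Gint j ε :=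
  intervalIntegral.integral_nonneg (psi₁_nonneg j hε) fun _ hx =>
    pow_nonneg (sin_nonneg_of_nonneg_of_le_pi hx.1 (hx.2.trans (psi₁_le_pi j ε))) _

lemma integral_sin_pow_pi_div_two_pos (m : ℕ) : 0 < ∫ x in 0..π / 2, sin x ^ m :=
  intervalIntegral.intervalIntegral_pos_of_pos_on ((continuous_sin.pow m).intervalIntegrable _ _)
    (fun x hx => pow_pos (sin_pos_of_pos_of_lt_pi hx.1 (by linarith [hx.2, pi_pos])) m)
    (by positivity)

lemma tendsto_Fint (j : ℕ) :
    Tendsto (Fint j) (𝓝 0) (𝓝 (∫ x in 0..π / 2, sin x ^ (j - 1))) := by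
  have hprim : Continuous fun a => ∫ x in a..π / 2, sin x ^ (j - 1) := by
    refine (intervalIntegral.continuous_primitive (μ := MeasureTheory.volume)
      (fun a b => (continuous_sin.pow (j - 1)).intervalIntegrable a b) (π / 2)).neg.congr
      fun a => ?_
    exact (intervalIntegral.integral_symm _ _).symm
  have hψ : Tendsto (psi₂ j) (𝓝 0) (𝓝 0) := by
    simpa [psi₂] using (show Continuous (psi₂ j) by unfold psi₂; fun_prop).tendsto 0
  exact (hprim.tendsto 0).comp hψ

lemma Fint_isTheta_one (j : ℕ) : Fint j =Θ[𝓝 0] fun _ => (1 : ℝ) :=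
  isTheta_one_of_tendsto (tendsto_Fint j) (integral_sin_pow_pi_div_two_pos _).ne'

def waistTerm (n j : ℕ) (δ : ℝ → ℝ) (ε : ℝ) : ℝ :=
  (1 - 2 * δ ε) ^ (n - j) * ((j : ℝ) + 1) ^ (j + 1) * (Fint j ε / Gint j ε)

lemma wB_eq_one_div (n j : ℕ) (δ : ℝ → ℝ) (r : ℝ) :
    wB n j δ r = 1 / (1 + waistTerm n j δ (r / 2)) :=
  rfl

section waistTerm

variable (n : ℕ) {δ : ℝ → ℝ} (hδ : Tendsto δ (𝓝[>] 0) (𝓝 0))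
include hδ

lemma waistTerm_isTheta {j : ℕ} (hj : 1 ≤ j) :
    waistTerm n j δ =Θ[𝓝[>] 0] fun ε => (ε ^ j)⁻¹ := by
  have hδ_factor : (fun ε => (1 - 2 * δ ε) ^ (n - j)) =Θ[𝓝[>] 0] fun _ => (1 : ℝ) :=
    isTheta_one_of_tendsto (by simpa using ((hδ.const_mul 2).const_sub 1).pow (n - j))
      one_ne_zero
  have hconst : (fun _ => ((j : ℝ) + 1) ^ (j + 1)) =Θ[𝓝[>] (0 : ℝ)] fun _ => (1 : ℝ) :=
    isTheta_const_const (by positivity) one_ne_zero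
  have hF : Fint j =Θ[𝓝[>] 0] fun _ => (1 : ℝ) := (Fint_isTheta_one j).mono nhdsWithin_le_nhds
  exact ((hδ_factor.mul hconst).mul (hF.div (Gint_isTheta hj))).trans_eventuallyEq
    (Eventually.of_forall fun ε => by simp)

lemma one_add_waistTerm_isTheta {j : ℕ} (hj : 1 ≤ j) :
    (fun ε => 1 + waistTerm n j δ ε) =Θ[𝓝[>] 0] fun ε => (ε ^ j)⁻¹ :=
  ((isLittleO_one_left_iff ℝ).2 (tendsto_norm_inv_pow_nhdsGT_zero (by omega))).add_isTheta
    (waistTerm_isTheta n hδ hj)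

lemma waistTerm_eventually_nonneg (j : ℕ) : ∀ᶠ ε in 𝓝[>] 0, 0 ≤ waistTerm n j δ ε := by
  have hδ_small : ∀ᶠ ε in 𝓝[>] 0, δ ε < 1 / 2 := hδ.eventually (gt_mem_nhds (by norm_num))
  have hF_pos : ∀ᶠ ε in 𝓝[>] 0, 0 < Fint j ε :=
    ((tendsto_Fint j).eventually (lt_mem_nhds (integral_sin_pow_pi_div_two_pos _))).filter_mono
      nhdsWithin_le_nhds
  filter_upwards [hδ_small, hF_pos, self_mem_nhdsWithin] with ε hδε hF (hε : 0 < ε)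
  have : 0 ≤ 1 - 2 * δ ε := by linarith
  have := Gint_nonneg j hε.le
  unfold waistTerm
  positivity

lemma tendsto_one_add_waistTerm_div {l k : ℕ} (hl : 1 ≤ l) (hlk : l < k) :
    Tendsto (fun ε => (1 + waistTerm n k δ ε) / (1 + waistTerm n l δ ε)) (𝓝[>] 0) atTop := by
  obtain ⟨p, rfl⟩ := Nat.exists_eq_add_of_lt hlk
  have hΘ : (fun ε => (1 + waistTerm n (l + p + 1) δ ε) / (1 + waistTerm n l δ ε))
      =Θ[𝓝[>] 0] fun ε => (ε ^ (p + 1))⁻¹ :=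
    ((one_add_waistTerm_isTheta n hδ (by omega)).div
      (one_add_waistTerm_isTheta n hδ hl)).trans_eventuallyEq
      (eventually_mem_nhdsWithin.mono fun ε (hε : 0 < ε) => by field_simp; ring)
  have hnonneg : ∀ᶠ ε in 𝓝[>] 0,
      0 ≤ (1 + waistTerm n (l + p + 1) δ ε) / (1 + waistTerm n l δ ε) := by
    filter_upwards [waistTerm_eventually_nonneg n hδ (l + p + 1),
      waistTerm_eventually_nonneg n hδ l] with ε hk hl
    exact div_nonneg (by linarith) (by linarith)
  refine (tendsto_congr' (hnonneg.mono fun ε h => norm_of_nonneg h)).1 ?_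
  exact hΘ.tendsto_norm_atTop_iff.2 (tendsto_norm_inv_pow_nhdsGT_zero p.succ_ne_zero)

end waistTerm

theorem waist_bound_ratio_tendsto_atTop_general
    (n : ℕ)
    (δ : ℝ → ℝ)
    (hδ_lim : Tendsto δ (nhdsWithin 0 (Ioi 0)) (nhds 0))
    (l k : ℕ) (hl : 1 ≤ l) (hlk : l < k) :
    Tendsto (fun r => wB n l δ r / wB n k δ r) (nhdsWithin 0 (Ioi 0)) atTop := by
  have hhalf : Tendsto (fun r : ℝ => r / 2) (𝓝[>] 0) (𝓝[>] 0) := by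
    refine tendsto_nhdsWithin_iff.2
      ⟨?_, eventually_mem_nhdsWithin.mono fun r (hr : 0 < r) => half_pos hr⟩
    simpa using ((continuous_id.div_const (2 : ℝ)).tendsto 0).mono_left nhdsWithin_le_nhds
  refine ((tendsto_one_add_waistTerm_div n hδ_lim hl hlk).comp hhalf).congr fun r => ?_
  simp only [Function.comp_apply, wB_eq_one_div, one_div, inv_div_inv]

/-- Comparison of waist bounds in different dimensions: for `1 ≤ l < k ≤ n`,
`w_l(r)/w_k(r) → ∞` as `r → 0⁺`. -/
theorem waist_bound_ratio_tendsto_atTop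
    (n : ℕ) (hn : 2 ≤ n)
    (δ : ℝ → ℝ)
    (hδ_range : ∀ t ∈ Ici (0 : ℝ), δ t ∈ Ico (0 : ℝ) (1 / 2))
    (hδ_mono : MonotoneOn δ (Ici 0))
    (hδ_lim : Tendsto δ (nhdsWithin 0 (Ioi 0)) (nhds 0))
    (l k : ℕ) (hl : 1 ≤ l) (hlk : l < k) (hkn : k ≤ n) :
    Tendsto (fun r => wB n l δ r / wB n k δ r) (nhdsWithin 0 (Ioi 0)) atTop :=
  waist_bound_ratio_tendsto_atTop_general n δ hδ_lim l k hl hlk
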